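/- For every k ∈ ℕ there exists a constant c > 0 (depending on k, α, β, r and χ, but not on j) such that for every j ∈ ℕ, the function h_j satisfies ‖h_j‖_{C^k} ≤ c · 2^{−βj/2} · 2^{αkj/2}; in particular (k = 0) ‖h_j‖_∞ ≤ c · 2^{−βj/2}. -/

import Mathlib

/-- The function `h_j(s) = (2^j ln s + r²)^{-β/2} e^{i(2^j ln s + r²)^{α/2}} χ(ln s) s⁻¹`
for `s > 0` with `ln s ∈ [1/2, 2]`, and `0` otherwise. -/
noncomputable def hAux (α β r : ℝ) (χ : ℝ → ℝ) (j : ℕ) (s : ℝ) : ℂ :=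
  if 0 < s ∧ Real.log s ∈ Set.Icc (1 / 2 : ℝ) 2 then
    ((((2 : ℝ) ^ j * Real.log s + r ^ 2) ^ (-(β / 2)) : ℝ) : ℂ) *
      Complex.exp (Complex.I * ((((2 : ℝ) ^ j * Real.log s + r ^ 2) ^ (α / 2) : ℝ) : ℂ)) *
      ((χ (Real.log s) : ℝ) : ℂ) * ((s⁻¹ : ℝ) : ℂ)
  else 0

open Set Function

/-- Data for one term in the representation of the iterated derivative. -/
structure TD where
  c : ℂ
  n : ℕ
  E : ℝ
  F : ℝ → ℝ
  m : ℕ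

/-- The function represented by one term. -/
noncomputable def TD.term (α r : ℝ) (j : ℕ) (p : TD) (s : ℝ) : ℂ :=
  if 0 < s then
    p.c * (2 : ℂ) ^ (j * p.n) *
      ((((2 : ℝ) ^ j * Real.log s + r ^ 2) ^ p.E : ℝ) : ℂ) *
      Complex.exp (Complex.I * ((((2 : ℝ) ^ j * Real.log s + r ^ 2) ^ (α / 2) : ℝ) : ℂ)) *
      ((p.F (Real.log s) : ℝ) : ℂ) * (((s⁻¹ : ℝ) ^ p.m : ℝ) : ℂ)
  else 0

/-- The invariants maintained by differentiation. -/
def TD.Good (α β : ℝ) (i : ℕ) (p : TD) : Prop :=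
  ContDiff ℝ ((⊤ : ℕ∞) : WithTop ℕ∞) p.F ∧ Function.support p.F ⊆ Set.Icc (1 / 2 : ℝ) 2 ∧ p.E ≤ 0 ∧
    (p.n : ℝ) + p.E ≤ -(β / 2) + i * (α / 2)

/-- The four terms produced by differentiating one term. -/
noncomputable def TD.D (α : ℝ) (p : TD) : Fin 4 → TD
  | 0 => ⟨p.c * p.E, p.n + 1, p.E - 1, p.F, p.m + 1⟩
  | 1 => ⟨p.c * Complex.I * (α / 2), p.n + 1, p.E + α / 2 - 1, p.F, p.m + 1⟩
  | 2 => ⟨p.c, p.n, p.E, deriv p.F, p.m + 1⟩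
  | 3 => ⟨-(p.m : ℂ) * p.c, p.n, p.E, p.F, p.m + 1⟩

lemma F_eq_zero_of_small {F : ℝ → ℝ} (hsupp : Function.support F ⊆ Set.Icc (1 / 2 : ℝ) 2)
    {t : ℝ} (ht : t < 1 / 2) : F t = 0 := by
  by_contra h
  exact absurd (hsupp h).1 (not_le.mpr ht)

lemma log_lt_of_lt_exp {s : ℝ} (h0 : 0 < s) (hs : s < Real.exp (1 / 3)) :
    Real.log s < 1 / 2 := by
  have := Real.log_lt_log h0 hs
  rw [Real.log_exp] at this
  linarith

lemma term_zero_of_small (α r : ℝ) (j : ℕ) (p : TD)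
    (hsupp : Function.support p.F ⊆ Set.Icc (1 / 2 : ℝ) 2) {s : ℝ}
    (hs : s < Real.exp (1 / 3)) : TD.term α r j p s = 0 := by
  unfold TD.term
  split
  · next h0 =>
    rw [F_eq_zero_of_small hsupp (log_lt_of_lt_exp h0 hs)]
    push_cast
    ring
  · rfl

lemma term_hasDerivAt {α : ℝ} (hα : α ∈ Set.Ioo (0 : ℝ) 1) {r : ℝ} (hr : 0 < r)
    (p : TD) (hF : ContDiff ℝ ((⊤ : ℕ∞) : WithTop ℕ∞) p.F)
    (hsupp : Function.support p.F ⊆ Set.Icc (1 / 2 : ℝ) 2) (j : ℕ) (s : ℝ) :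
    HasDerivAt (TD.term α r j p) (∑ d : Fin 4, TD.term α r j (TD.D α p d) s) s := by
  rcases lt_or_ge s (Real.exp (1 / 3)) with hs | hs
  · -- near s, everything vanishes
    have hzero : ∀ s' ∈ Set.Iio (Real.exp (1 / 3)), TD.term α r j p s' = 0 :=
      fun s' hs' => term_zero_of_small α r j p hsupp hs'
    have hd : ∀ d : Fin 4, TD.term α r j (TD.D α p d) s = 0 := by
      intro d
      have hsupp' : Function.support (TD.D α p d).F ⊆ Set.Icc (1 / 2 : ℝ) 2 := by
        fin_cases d
        · exact hsupp
        · exact hsupp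
        · exact (support_deriv_subset).trans
            (closure_minimal hsupp isClosed_Icc)
        · exact hsupp
      exact term_zero_of_small α r j (TD.D α p d) hsupp' hs
    rw [Finset.sum_eq_zero fun d _ => hd d]
    refine (hasDerivAt_const s (0 : ℂ)).congr_of_eventuallyEq ?_
    filter_upwards [Iio_mem_nhds hs] with s' hs'
    exact hzero s' hs'
  · -- the smooth region
    have hs1 : (1 : ℝ) < s := lt_of_lt_of_le (by
      nlinarith [Real.add_one_le_exp (1/3 : ℝ)]) hs
    have hspos : (0 : ℝ) < s := by linarith
    have hsne : s ≠ 0 := ne_of_gt hspos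
    have hlogpos : 0 < Real.log s := Real.log_pos hs1
    set τ : ℝ := (2 : ℝ) ^ j * Real.log s + r ^ 2 with hτdef
    have hτpos : 0 < τ := by positivity
    have hτne : τ ≠ 0 := ne_of_gt hτpos
    -- derivatives of the pieces
    have hlog : HasDerivAt Real.log s⁻¹ s := Real.hasDerivAt_log hsne
    have hτ : HasDerivAt (fun x => (2 : ℝ) ^ j * Real.log x + r ^ 2)
        ((2 : ℝ) ^ j * s⁻¹) s := (hlog.const_mul ((2 : ℝ) ^ j)).add_const (r ^ 2)
    have hA : HasDerivAt (fun x => ((2 : ℝ) ^ j * Real.log x + r ^ 2) ^ p.E)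
        (p.E * τ ^ (p.E - 1) * ((2 : ℝ) ^ j * s⁻¹)) s :=
      by have h := (Real.hasDerivAt_rpow_const (x := τ) (p := p.E) (Or.inl hτne)).comp s hτ; exact h
    have hB0 : HasDerivAt (fun x => ((2 : ℝ) ^ j * Real.log x + r ^ 2) ^ (α / 2))
        ((α / 2) * τ ^ (α / 2 - 1) * ((2 : ℝ) ^ j * s⁻¹)) s :=
      by have h := (Real.hasDerivAt_rpow_const (x := τ) (p := α / 2) (Or.inl hτne)).comp s hτ; exact h
    have hB : HasDerivAt
        (fun x => Complex.exp (Complex.I *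
          ((((2 : ℝ) ^ j * Real.log x + r ^ 2) ^ (α / 2) : ℝ) : ℂ)))
        (Complex.exp (Complex.I * ((τ ^ (α / 2) : ℝ) : ℂ)) *
          (Complex.I * (((α / 2) * τ ^ (α / 2 - 1) * ((2 : ℝ) ^ j * s⁻¹) : ℝ) : ℂ))) s :=
      (hB0.ofReal_comp.const_mul Complex.I).cexp
    have hFd : HasDerivAt p.F (deriv p.F (Real.log s)) (Real.log s) :=
      (hF.differentiable (by simp) _).hasDerivAt
    have hC : HasDerivAt (fun x => ((p.F (Real.log x) : ℝ) : ℂ))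
        (((deriv p.F (Real.log s) * s⁻¹ : ℝ) : ℂ)) s :=
      ((hFd.comp s hlog)).ofReal_comp
    have hD : HasDerivAt (fun x => (((x⁻¹ : ℝ) ^ p.m : ℝ) : ℂ))
        ((((p.m : ℝ) * (s⁻¹ : ℝ) ^ (p.m - 1) * (-(s ^ 2)⁻¹) : ℝ)) : ℂ) s :=
      ((hasDerivAt_inv hsne).fun_pow p.m).ofReal_comp
    have hφ : HasDerivAt
        (fun x => p.c * (2 : ℂ) ^ (j * p.n) *
          ((((2 : ℝ) ^ j * Real.log x + r ^ 2) ^ p.E : ℝ) : ℂ) *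
          Complex.exp (Complex.I *
            ((((2 : ℝ) ^ j * Real.log x + r ^ 2) ^ (α / 2) : ℝ) : ℂ)) *
          ((p.F (Real.log x) : ℝ) : ℂ) * (((x⁻¹ : ℝ) ^ p.m : ℝ) : ℂ))
        ((((p.c * (2 : ℂ) ^ (j * p.n) * ((p.E * τ ^ (p.E - 1) * ((2 : ℝ) ^ j * s⁻¹) : ℝ) : ℂ)) *
              Complex.exp (Complex.I * ((τ ^ (α / 2) : ℝ) : ℂ)) +
            p.c * (2 : ℂ) ^ (j * p.n) * ((τ ^ p.E : ℝ) : ℂ) *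
              (Complex.exp (Complex.I * ((τ ^ (α / 2) : ℝ) : ℂ)) *
                (Complex.I * (((α / 2) * τ ^ (α / 2 - 1) * ((2 : ℝ) ^ j * s⁻¹) : ℝ) : ℂ)))) *
            ((p.F (Real.log s) : ℝ) : ℂ) +
            p.c * (2 : ℂ) ^ (j * p.n) * ((τ ^ p.E : ℝ) : ℂ) *
              Complex.exp (Complex.I * ((τ ^ (α / 2) : ℝ) : ℂ)) *
              (((deriv p.F (Real.log s) * s⁻¹ : ℝ) : ℂ))) *
            (((s⁻¹ : ℝ) ^ p.m : ℝ) : ℂ) +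
          p.c * (2 : ℂ) ^ (j * p.n) * ((τ ^ p.E : ℝ) : ℂ) *
            Complex.exp (Complex.I * ((τ ^ (α / 2) : ℝ) : ℂ)) *
            ((p.F (Real.log s) : ℝ) : ℂ) *
            ((((p.m : ℝ) * (s⁻¹ : ℝ) ^ (p.m - 1) * (-(s ^ 2)⁻¹) : ℝ)) : ℂ)) s := by
      exact ((((hA.ofReal_comp.const_mul (p.c * (2 : ℂ) ^ (j * p.n))).mul hB).mul hC).mul hD)
    have heq : TD.term α r j p =ᶠ[nhds s]
        (fun x => p.c * (2 : ℂ) ^ (j * p.n) *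
          ((((2 : ℝ) ^ j * Real.log x + r ^ 2) ^ p.E : ℝ) : ℂ) *
          Complex.exp (Complex.I *
            ((((2 : ℝ) ^ j * Real.log x + r ^ 2) ^ (α / 2) : ℝ) : ℂ)) *
          ((p.F (Real.log x) : ℝ) : ℂ) * (((x⁻¹ : ℝ) ^ p.m : ℝ) : ℂ)) := by
      filter_upwards [Ioi_mem_nhds hs1] with x hx
      rw [TD.term, if_pos (lt_trans zero_lt_one hx)]
    refine HasDerivAt.congr_deriv (hφ.congr_of_eventuallyEq heq) ?_
    -- now prove the value equality
    have hEadd : ((τ ^ (p.E + α / 2 - 1) : ℝ) : ℂ) =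
        ((τ ^ p.E : ℝ) : ℂ) * ((τ ^ (α / 2 - 1) : ℝ) : ℂ) := by
      rw [show p.E + α / 2 - 1 = p.E + (α / 2 - 1) by ring, Real.rpow_add hτpos]
      push_cast; ring
    have hm : ((p.m : ℝ) * (s⁻¹ : ℝ) ^ (p.m - 1) * (-(s ^ 2)⁻¹) : ℝ) =
        -(p.m : ℝ) * (s⁻¹ : ℝ) ^ (p.m + 1) := by
      cases p.m with
      | zero => simp
      | succ mm =>
        simp only [Nat.add_sub_cancel]
        rw [show ((s : ℝ) ^ 2)⁻¹ = s⁻¹ * s⁻¹ by rw [sq, mul_inv]]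
        push_cast
        ring
    rw [Fin.sum_univ_four]
    show _ = TD.term α r j ⟨p.c * p.E, p.n + 1, p.E - 1, p.F, p.m + 1⟩ s +
        TD.term α r j ⟨p.c * Complex.I * (α / 2), p.n + 1, p.E + α / 2 - 1, p.F, p.m + 1⟩ s +
        TD.term α r j ⟨p.c, p.n, p.E, deriv p.F, p.m + 1⟩ s +
        TD.term α r j ⟨-(p.m : ℂ) * p.c, p.n, p.E, p.F, p.m + 1⟩ s
    simp only [TD.term, if_pos hspos, ← hτdef]
    rw [hEadd, hm]
    simp only [Nat.mul_succ, pow_add, pow_succ]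
    push_cast
    ring

lemma hAux_eq_term (α β r : ℝ) (χ : ℝ → ℝ)
    (hχsupp : Function.support χ ⊆ Set.Icc (1 / 2 : ℝ) 2) (j : ℕ) (s : ℝ) :
    hAux α β r χ j s = TD.term α r j ⟨1, 0, -(β / 2), χ, 1⟩ s := by
  rw [hAux, TD.term]
  by_cases h0 : 0 < s
  · by_cases hlog : Real.log s ∈ Set.Icc (1 / 2 : ℝ) 2
    · rw [if_pos ⟨h0, hlog⟩, if_pos h0]
      simp only [Nat.mul_zero, pow_zero, pow_one]
      ring
    · rw [if_neg (fun h => hlog h.2), if_pos h0]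
      have h : χ (Real.log s) = 0 := by
        by_contra h
        exact hlog (hχsupp h)
      simp [h]
  · rw [if_neg (fun h => h0 h.1), if_neg h0]

/-- Representation of the iterated derivatives of `h_j` as a finite sum of terms. -/
lemma rep (α β r : ℝ) (hα : α ∈ Set.Ioo (0 : ℝ) 1) (hβ : 0 ≤ β) (hr : 0 < r)
    (χ : ℝ → ℝ) (hχ : ContDiff ℝ (⊤ : ℕ∞) χ)
    (hχsupp : Function.support χ ⊆ Set.Icc (1 / 2 : ℝ) 2) (i : ℕ) :
    ∃ (ι : Type) (_ : Fintype ι) (P : ι → TD), (∀ q, TD.Good α β i (P q)) ∧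
      ∀ j s, iteratedDeriv i (hAux α β r χ j) s = ∑ q, TD.term α r j (P q) s := by
  induction i with
  | zero =>
    refine ⟨Unit, inferInstance, fun _ => ⟨1, 0, -(β / 2), χ, 1⟩, ?_, ?_⟩
    · intro q
      refine ⟨hχ.of_le (by simp), hχsupp, by linarith, ?_⟩
      push_cast
      linarith
    · intro j s
      rw [iteratedDeriv_zero, hAux_eq_term α β r χ hχsupp j s]
      simp
  | succ i ih =>
    obtain ⟨ι, hι, P, hG, hrep⟩ := ih
    refine ⟨ι × Fin 4, inferInstance, fun q => TD.D α (P q.1) q.2, ?_, ?_⟩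
    · rintro ⟨q, d⟩
      obtain ⟨h1, h2, h3, h4⟩ := hG q
      have hα2 : α / 2 - 1 ≤ 0 := by have := hα.2; linarith
      have hα0 : 0 < α := hα.1
      have hexp : ((i : ℝ) + 1) * (α / 2) = (i : ℝ) * (α / 2) + α / 2 := by ring
      have h1' : ContDiff ℝ ((⊤ : ℕ∞) : WithTop ℕ∞) (deriv (P q).F) :=
        (contDiff_infty_iff_deriv.mp h1).2
      fin_cases d <;>
        simp only [TD.D, TD.Good] <;>
        refine ⟨?_, ?_, by linarith, by push_cast; linarith⟩
      · exact h1
      · exact h2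
      · exact h1
      · exact h2
      · exact h1'
      · exact (support_deriv_subset).trans (closure_minimal h2 isClosed_Icc)
      · exact h1
      · exact h2
    · intro j s
      rw [iteratedDeriv_succ, show iteratedDeriv i (hAux α β r χ j) =
        fun s => ∑ q, TD.term α r j (P q) s from funext (hrep j)]
      have hd : HasDerivAt (fun s => ∑ q, TD.term α r j (P q) s)
          (∑ q, ∑ d : Fin 4, TD.term α r j (TD.D α (P q) d) s) s := by
        exact HasDerivAt.fun_sum fun q _ =>
          term_hasDerivAt hα hr (P q) (hG q).1 (hG q).2.1 j s
      rw [hd.deriv, Fintype.sum_prod_type]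

lemma term_bound {α β r : ℝ} (hα : α ∈ Set.Ioo (0 : ℝ) 1) (hβ : 0 ≤ β) (hr : 0 < r)
    (i : ℕ) (p : TD) (hp : TD.Good α β i p) :
    ∃ C > 0, ∀ (j : ℕ) (s : ℝ),
      ‖TD.term α r j p s‖ ≤ C * (2 : ℝ) ^ ((j : ℝ) * (-(β / 2) + i * (α / 2))) := by
  obtain ⟨h1, h2, h3, h4⟩ := hp
  have hcs : HasCompactSupport p.F :=
    HasCompactSupport.intro isCompact_Icc (fun t ht => by
      by_contra h
      exact ht (h2 h))
  obtain ⟨M, hM⟩ := (h1.continuous.norm).bounded_above_of_compact_support hcs.norm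
  have hM0 : 0 ≤ M := le_trans (norm_nonneg _) (hM 0)
  refine ⟨(‖p.c‖ + 1) * (M + 1) * (2 : ℝ) ^ (-p.E), by positivity, ?_⟩
  intro j s
  rw [TD.term]
  split
  · next h0 =>
    by_cases hF0 : p.F (Real.log s) = 0
    · rw [hF0]
      simp only [Complex.ofReal_zero, mul_zero, zero_mul, norm_zero]
      positivity
    · have hlog : Real.log s ∈ Set.Icc (1 / 2 : ℝ) 2 := h2 hF0
      have hs1 : (1 : ℝ) ≤ s := by
        have h := Real.exp_le_exp.mpr (show (0 : ℝ) ≤ Real.log s by linarith [hlog.1])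
        rwa [Real.exp_zero, Real.exp_log h0] at h
      set τ : ℝ := (2 : ℝ) ^ j * Real.log s + r ^ 2 with hτdef
      have h2j : (0 : ℝ) < (2 : ℝ) ^ j := by positivity
      have hτpos : 0 < τ := by
        have := hlog.1
        nlinarith
      have hτlb : (2 : ℝ) ^ (j : ℝ) * (1 / 2) ≤ τ := by
        rw [Real.rpow_natCast]
        nlinarith [hlog.1, sq_nonneg r]
      -- norms of factors
      have hnorm : ‖p.c * (2 : ℂ) ^ (j * p.n) * ((τ ^ p.E : ℝ) : ℂ) *
            Complex.exp (Complex.I * ((τ ^ (α / 2) : ℝ) : ℂ)) *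
            ((p.F (Real.log s) : ℝ) : ℂ) * (((s⁻¹ : ℝ) ^ p.m : ℝ) : ℂ)‖ =
          ‖p.c‖ * (2 : ℝ) ^ (j * p.n) * τ ^ p.E * ‖p.F (Real.log s)‖ * (s⁻¹ : ℝ) ^ p.m := by
        have hexp1 : ‖Complex.exp (Complex.I * ((τ ^ (α / 2) : ℝ) : ℂ))‖ = 1 := by
          rw [Complex.norm_exp]
          have hre : (Complex.I * ((τ ^ (α / 2) : ℝ) : ℂ)).re = 0 := by
            simp [Complex.mul_re]
          rw [hre, Real.exp_zero]
        simp only [norm_mul, norm_pow, Complex.norm_real, Real.norm_eq_abs, hexp1]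
        have e1 : ‖(2 : ℂ)‖ = 2 := by norm_num
        rw [e1, abs_of_pos (Real.rpow_pos_of_pos hτpos _),
          abs_of_nonneg (by positivity : (0:ℝ) ≤ (s:ℝ)⁻¹)]
        ring
      rw [hnorm]
      -- key exponent bound
      have hkey : (2 : ℝ) ^ (j * p.n) * τ ^ p.E ≤
          (2 : ℝ) ^ (-p.E) * (2 : ℝ) ^ ((j : ℝ) * (-(β / 2) + i * (α / 2))) := by
        have hb1 : τ ^ p.E ≤ ((2 : ℝ) ^ (j : ℝ) * (1 / 2)) ^ p.E :=
          Real.rpow_le_rpow_of_nonpos (by positivity) hτlb h3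
        have hb2 : ((2 : ℝ) ^ (j : ℝ) * (1 / 2)) ^ p.E =
            (2 : ℝ) ^ ((j : ℝ) * p.E) * (2 : ℝ) ^ (-p.E) := by
          rw [Real.mul_rpow (by positivity) (by norm_num),
            ← Real.rpow_mul (by norm_num : (0:ℝ) ≤ 2),
            show (1 / 2 : ℝ) = (2 : ℝ) ^ (-1 : ℝ) by
              rw [Real.rpow_neg_one]; norm_num,
            ← Real.rpow_mul (by norm_num : (0:ℝ) ≤ 2)]
          ring_nf
        have hb3 : (2 : ℝ) ^ (j * p.n) = (2 : ℝ) ^ (((j * p.n : ℕ)) : ℝ) :=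
          (Real.rpow_natCast 2 (j * p.n)).symm
        calc (2 : ℝ) ^ (j * p.n) * τ ^ p.E
            ≤ (2 : ℝ) ^ (j * p.n) * ((2 : ℝ) ^ ((j : ℝ) * p.E) * (2 : ℝ) ^ (-p.E)) := by
              rw [← hb2]
              exact mul_le_mul_of_nonneg_left hb1 (by positivity)
          _ = (2 : ℝ) ^ (-p.E) * ((2 : ℝ) ^ (((j * p.n : ℕ)) : ℝ) * (2 : ℝ) ^ ((j : ℝ) * p.E)) := by
              rw [← hb3]; ring
          _ = (2 : ℝ) ^ (-p.E) * (2 : ℝ) ^ ((j : ℝ) * ((p.n : ℝ) + p.E)) := by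
              rw [← Real.rpow_add (by norm_num : (0:ℝ) < 2)]
              push_cast
              ring_nf
          _ ≤ (2 : ℝ) ^ (-p.E) * (2 : ℝ) ^ ((j : ℝ) * (-(β / 2) + i * (α / 2))) := by
              refine mul_le_mul_of_nonneg_left
                (Real.rpow_le_rpow_of_exponent_le one_le_two
                  (mul_le_mul_of_nonneg_left h4 (Nat.cast_nonneg j))) (by positivity)
      have hsm : (s⁻¹ : ℝ) ^ p.m ≤ 1 :=
        pow_le_one₀ (by positivity) (inv_le_one_of_one_le₀ hs1)
      calc ‖p.c‖ * (2 : ℝ) ^ (j * p.n) * τ ^ p.E * ‖p.F (Real.log s)‖ * (s⁻¹ : ℝ) ^ p.m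
          = (‖p.c‖ * ‖p.F (Real.log s)‖ * (s⁻¹ : ℝ) ^ p.m) *
            ((2 : ℝ) ^ (j * p.n) * τ ^ p.E) := by ring
        _ ≤ ((‖p.c‖ + 1) * (M + 1) * 1) *
            ((2 : ℝ) ^ (-p.E) * (2 : ℝ) ^ ((j : ℝ) * (-(β / 2) + i * (α / 2)))) := by
            refine mul_le_mul ?_ hkey (by positivity) (by positivity)
            have hMF := hM (Real.log s)
            rw [norm_norm] at hMF
            refine mul_le_mul ?_ hsm (by positivity) (by positivity)
            refine mul_le_mul (by linarith) (by linarith [hMF]) (norm_nonneg _) (by positivity)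
        _ = (‖p.c‖ + 1) * (M + 1) * (2 : ℝ) ^ (-p.E) *
            (2 : ℝ) ^ ((j : ℝ) * (-(β / 2) + i * (α / 2))) := by ring
  · simp only [norm_zero]
    positivity

/-- The `C^k` estimates (2.6)–(2.7) of the functions `h_j`:
`‖h_j‖_{C^k} ≤ c 2^{-βj/2} 2^{αkj/2}` for all `j`, with `c` independent of `j`. -/
theorem stmt_6 (α β r : ℝ) (hα : α ∈ Set.Ioo (0 : ℝ) 1) (hβ : 0 ≤ β) (hr : 0 < r)
    (χ : ℝ → ℝ) (hχ : ContDiff ℝ (⊤ : ℕ∞) χ) (hχc : HasCompactSupport χ)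
    (hχsupp : Function.support χ ⊆ Set.Icc (1 / 2 : ℝ) 2) (k : ℕ) :
    ∃ c > (0 : ℝ), ∀ j : ℕ,
      ∑ i ∈ Finset.range (k + 1), ⨆ s : ℝ, ‖iteratedDeriv i (hAux α β r χ j) s‖ ≤
        c * (2 : ℝ) ^ (-(β * j) / 2) * (2 : ℝ) ^ ((α * k * j) / 2) := by
  have hbnd : ∀ i : ℕ, ∃ C > 0, ∀ j : ℕ,
      (⨆ s : ℝ, ‖iteratedDeriv i (hAux α β r χ j) s‖) ≤
        C * (2 : ℝ) ^ ((j : ℝ) * (-(β / 2) + i * (α / 2))) := by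
    intro i
    obtain ⟨ι, hι, P, hG, hrep⟩ := rep α β r hα hβ hr χ hχ hχsupp i
    choose C hCpos hC using fun q => term_bound hα hβ hr i (P q) (hG q)
    refine ⟨(∑ q, C q) + 1, by
      have : (0:ℝ) ≤ ∑ q, C q := Finset.sum_nonneg fun q _ => (hCpos q).le
      linarith, ?_⟩
    intro j
    apply ciSup_le
    intro s
    rw [hrep j s]
    calc ‖∑ q, TD.term α r j (P q) s‖ ≤ ∑ q, ‖TD.term α r j (P q) s‖ :=
          norm_sum_le _ _
      _ ≤ ∑ q, C q * (2 : ℝ) ^ ((j : ℝ) * (-(β / 2) + i * (α / 2))) :=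
          Finset.sum_le_sum fun q _ => hC q j s
      _ = (∑ q, C q) * (2 : ℝ) ^ ((j : ℝ) * (-(β / 2) + i * (α / 2))) :=
          (Finset.sum_mul _ _ _).symm
      _ ≤ ((∑ q, C q) + 1) * (2 : ℝ) ^ ((j : ℝ) * (-(β / 2) + i * (α / 2))) := by
          have : (0:ℝ) < (2 : ℝ) ^ ((j : ℝ) * (-(β / 2) + i * (α / 2))) :=
            Real.rpow_pos_of_pos (by norm_num) _
          nlinarith
  choose C hCpos hC using hbnd
  refine ⟨∑ i ∈ Finset.range (k + 1), C i,
    Finset.sum_pos (fun i _ => hCpos i) ⟨0, by simp⟩, ?_⟩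
  intro j
  have hsplit : ∀ i, i ≤ k → (2 : ℝ) ^ ((j : ℝ) * (-(β / 2) + i * (α / 2))) ≤
      (2 : ℝ) ^ (-(β * j) / 2) * (2 : ℝ) ^ ((α * k * j) / 2) := by
    intro i hik
    rw [← Real.rpow_add (by norm_num : (0:ℝ) < 2)]
    refine Real.rpow_le_rpow_of_exponent_le one_le_two ?_
    have hik' : (i : ℝ) ≤ k := Nat.cast_le.mpr hik
    have hj0 : (0 : ℝ) ≤ j := Nat.cast_nonneg j
    nlinarith [mul_nonneg (mul_nonneg (sub_nonneg.mpr hik') hα.1.le) hj0]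
  calc ∑ i ∈ Finset.range (k + 1), ⨆ s : ℝ, ‖iteratedDeriv i (hAux α β r χ j) s‖
      ≤ ∑ i ∈ Finset.range (k + 1),
          C i * ((2 : ℝ) ^ (-(β * j) / 2) * (2 : ℝ) ^ ((α * k * j) / 2)) := by
        refine Finset.sum_le_sum fun i hi => ?_
        refine le_trans (hC i j) ?_
        refine mul_le_mul_of_nonneg_left ?_ (hCpos i).le
        exact hsplit i (Nat.lt_succ_iff.mp (Finset.mem_range.mp hi))
    _ = (∑ i ∈ Finset.range (k + 1), C i) * (2 : ℝ) ^ (-(β * j) / 2) *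
          (2 : ℝ) ^ ((α * k * j) / 2) := by
        rw [← Finset.sum_mul]
        ring
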